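/- Let b ≥ 3 be an integer. For every N ≥ 2 the minimal gap of the base-b van der Corput sequence satisfies 1/(bN) ≤ δ_min((g_b(n)), N) ≤ b/N. -/

import Mathlib

/-- Distance from `x : ℝ` to the nearest integer. -/
noncomputable def nid (x : ℝ) : ℝ := |x - round x|

/-- Minimal gap of a real sequence among indices `1 ≤ m ≠ n ≤ N`,
measured by the distance to the nearest integer of the difference. -/
noncomputable def minGap (x : ℕ → ℝ) (N : ℕ) : ℝ :=
  sInf {r | ∃ m n, 1 ≤ m ∧ m ≤ N ∧ 1 ≤ n ∧ n ≤ N ∧ m ≠ n ∧ r = nid (x n - x m)}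

/-- The base-`b` van der Corput sequence: digit reversal of `n` into `[0,1)`.
The `i`-th base-`b` digit of `n` is `n / b ^ i % b`. -/
noncomputable def vdc (b n : ℕ) : ℝ :=
  ∑ i ∈ Finset.range n, ((n / b ^ i % b : ℕ) : ℝ) / (b : ℝ) ^ (i + 1)

/-- Digit reversal of `n` in base `b` with `K` digits. -/
def Rv (b K n : ℕ) : ℕ := ∑ i ∈ Finset.range K, (n / b ^ i % b) * b ^ (K - 1 - i)

lemma Rv_succ (b K n : ℕ) : Rv b (K + 1) n = n % b * b ^ K + Rv b K (n / b) := by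
  unfold Rv
  rw [Finset.sum_range_succ']
  rw [add_comm]
  congr 1
  · simp
  · apply Finset.sum_congr rfl
    intro i _
    have e1 : n / b ^ (i + 1) = n / b / b ^ i := by
      rw [Nat.div_div_eq_div_mul, ← pow_succ']
    have e2 : K + 1 - 1 - (i + 1) = K - 1 - i := by omega
    rw [e1, e2]

lemma Rv_lt (b : ℕ) (hb : 0 < b) : ∀ K n, Rv b K n < b ^ K := by
  intro K
  induction K with
  | zero => intro n; simp [Rv]
  | succ K ih =>
    intro n
    rw [Rv_succ]
    have h1 : n % b ≤ b - 1 := by have := Nat.mod_lt n hb; omega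
    have h2 := ih (n / b)
    calc n % b * b ^ K + Rv b K (n / b) < n % b * b ^ K + b ^ K := by omega
      _ ≤ (b - 1) * b ^ K + b ^ K := by
          have := Nat.mul_le_mul_right (b ^ K) h1; omega
      _ = b ^ (K + 1) := by
          rw [pow_succ, Nat.sub_one_mul]
          have h3 : b ^ K ≤ b * b ^ K := Nat.le_mul_of_pos_left _ hb
          have h4 : b * b ^ K = b ^ K * b := Nat.mul_comm _ _
          omega

lemma Rv_inj (b : ℕ) (hb : 0 < b) : ∀ K n m, n < b ^ K → m < b ^ K →
    Rv b K n = Rv b K m → n = m := by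
  intro K
  induction K with
  | zero => intro n m hn hm _; simp at hn hm; omega
  | succ K ih =>
    intro n m hn hm h
    rw [Rv_succ, Rv_succ] at h
    have h1 := Rv_lt b hb K (n / b)
    have h2 := Rv_lt b hb K (m / b)
    have hmod : n % b = m % b := by
      by_contra hne
      rcases Nat.lt_or_ge (n % b) (m % b) with hlt | hge
      · have hle : (n % b + 1) * b ^ K ≤ m % b * b ^ K :=
          Nat.mul_le_mul_right _ hlt
        rw [add_one_mul] at hle
        omega
      · have hlt : m % b < n % b := by omega
        have hle : (m % b + 1) * b ^ K ≤ n % b * b ^ K :=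
          Nat.mul_le_mul_right _ hlt
        rw [add_one_mul] at hle
        omega
    rw [hmod] at h
    have hR : Rv b K (n / b) = Rv b K (m / b) := by omega
    have hnd : n / b < b ^ K := by
      rw [Nat.div_lt_iff_lt_mul hb, ← pow_succ]; exact hn
    have hmd : m / b < b ^ K := by
      rw [Nat.div_lt_iff_lt_mul hb, ← pow_succ]; exact hm
    have hdiv := ih (n / b) (m / b) hnd hmd hR
    have hfin : n = b * (n / b) + n % b := (Nat.div_add_mod n b).symm
    rw [hdiv, hmod, Nat.div_add_mod] at hfin
    exact hfin

lemma digit_zero_of_le (b n i : ℕ) (hb : 2 ≤ b) (h : n ≤ i) : n / b ^ i = 0 := by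
  apply Nat.div_eq_of_lt
  calc n < 2 ^ n := Nat.lt_two_pow_self
    _ ≤ b ^ n := Nat.pow_le_pow_left hb n
    _ ≤ b ^ i := Nat.pow_le_pow_right (by omega) h

lemma vdc_eq_Rv (b K n : ℕ) (hb : 2 ≤ b) (hn : n < b ^ K) :
    vdc b n = (Rv b K n : ℝ) / (b : ℝ) ^ K := by
  have hb0 : (0:ℝ) < (b:ℝ) := by positivity
  set M := max n K with hM
  have hvdc : vdc b n = ∑ i ∈ Finset.range M, ((n / b ^ i % b : ℕ) : ℝ) / (b : ℝ) ^ (i + 1) := by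
    unfold vdc
    apply Finset.sum_subset
    · exact Finset.range_subset_range.2 (le_max_left _ _)
    · intro i _ hi
      simp only [Finset.mem_range, not_lt] at hi
      rw [digit_zero_of_le b n i hb hi]
      simp
  rw [hvdc]
  have hRv : (Rv b K n : ℝ) / (b : ℝ) ^ K
      = ∑ i ∈ Finset.range M, ((n / b ^ i % b : ℕ) : ℝ) / (b : ℝ) ^ (i + 1) := by
    unfold Rv
    push_cast
    rw [Finset.sum_div]
    have step1 : ∑ i ∈ Finset.range K, ((n / b ^ i % b : ℕ) : ℝ) * (b:ℝ) ^ (K - 1 - i) / (b : ℝ) ^ K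
        = ∑ i ∈ Finset.range K, ((n / b ^ i % b : ℕ) : ℝ) / (b : ℝ) ^ (i + 1) := by
      apply Finset.sum_congr rfl
      intro i hi
      simp only [Finset.mem_range] at hi
      rw [div_eq_div_iff (by positivity) (by positivity)]
      rw [mul_assoc, ← pow_add]
      congr 2
      omega
    rw [step1]
    apply Finset.sum_subset
    · exact Finset.range_subset_range.2 (le_max_right _ _)
    · intro i _ hi
      simp only [Finset.mem_range, not_lt] at hi
      have : n / b ^ i = 0 := by
        apply Nat.div_eq_of_lt
        exact lt_of_lt_of_le hn (Nat.pow_le_pow_right (by omega) hi)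
      rw [this]
      simp
  rw [hRv]

lemma nid_nonneg (x : ℝ) : 0 ≤ nid x := abs_nonneg _

lemma nid_ge (j : ℤ) (c : ℕ) (hc : 0 < c) (hj : ¬ (c:ℤ) ∣ j) :
    1 / (c : ℝ) ≤ nid ((j : ℝ) / (c : ℝ)) := by
  have hc0 : (0:ℝ) < (c:ℝ) := by exact_mod_cast hc
  set r := round ((j : ℝ) / (c : ℝ)) with hr
  have key : (j : ℝ) / c - r = ((j - r * c : ℤ) : ℝ) / c := by
    push_cast; field_simp
  have hne : j - r * c ≠ 0 := by
    intro h
    exact hj ⟨r, by linear_combination h⟩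
  have h1 : (1:ℝ) ≤ |((j - r * c : ℤ) : ℝ)| := by
    rw [← Int.cast_abs]
    exact_mod_cast Int.one_le_abs hne
  unfold nid
  rw [← hr, key, abs_div, abs_of_pos hc0]
  gcongr

lemma nid_small (x : ℝ) (h0 : 0 ≤ x) (h : x < 1/2) : nid x = x := by
  have : round x = 0 := round_eq_zero_iff.2 ⟨by linarith, by simpa using h⟩
  unfold nid
  rw [this]
  simpa using abs_of_nonneg h0

lemma Rv_pow (b a : ℕ) (hab : a < b) : ∀ k, 1 ≤ k → Rv b k (a * b ^ (k - 1)) = a := by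
  intro k
  induction k with
  | zero => omega
  | succ k ih =>
    intro _
    rcases Nat.eq_zero_or_pos k with hk | hk
    · subst hk
      simp only [Nat.sub_self, pow_zero, mul_one]
      rw [Rv_succ]
      have h0 : Rv b 0 (a / b) = 0 := by simp [Rv]
      rw [h0, Nat.mod_eq_of_lt hab]
      simp
    · have hb0 : 0 < b := by omega
      have e1 : k + 1 - 1 = k := rfl
      rw [e1, Rv_succ]
      have hk1 : b ^ k = b ^ (k - 1) * b := by
        rw [← pow_succ]
        congr 1
        omega
      have hmod : a * b ^ k % b = 0 := by
        rw [hk1, ← mul_assoc]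
        exact Nat.mul_mod_left _ _
      have hdiv : a * b ^ k / b = a * b ^ (k - 1) := by
        rw [hk1, ← mul_assoc]
        exact Nat.mul_div_cancel _ hb0
      rw [hmod, hdiv, ih hk]
      simp

lemma vdc_pow (b a k : ℕ) (hb : 2 ≤ b) (hk : 1 ≤ k) (hab : a < b) :
    vdc b (a * b ^ (k - 1)) = (a : ℝ) / (b : ℝ) ^ k := by
  have hlt : a * b ^ (k - 1) < b ^ k := by
    have h1 : b ^ k = b ^ (k - 1) * b := by rw [← pow_succ]; congr 1; omega
    rw [h1]
    have := pow_pos (show 0 < b by omega) (k - 1)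
    calc a * b ^ (k-1) < b * b ^ (k-1) := by
          exact Nat.mul_lt_mul_of_pos_right hab this
      _ = b ^ (k-1) * b := Nat.mul_comm _ _
  rw [vdc_eq_Rv b k _ hb hlt, Rv_pow b a hab k hk]

theorem stmt9 (b : ℕ) (hb : 3 ≤ b) (N : ℕ) (hN : 2 ≤ N) :
    1 / ((b : ℝ) * N) ≤ minGap (vdc b) N ∧ minGap (vdc b) N ≤ (b : ℝ) / N := by
  have hb1 : 1 < b := by omega
  have hb0 : 0 < b := by omega
  have hb2 : 2 ≤ b := by omega
  have hbR : (0:ℝ) < (b:ℝ) := by exact_mod_cast hb0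
  have hNR : (0:ℝ) < (N:ℝ) := by exact_mod_cast (show 0 < N by omega)
  set S := {r | ∃ m n, 1 ≤ m ∧ m ≤ N ∧ 1 ≤ n ∧ n ≤ N ∧ m ≠ n ∧ r = nid (vdc b n - vdc b m)}
    with hS
  have hne : S.Nonempty := ⟨nid (vdc b 2 - vdc b 1),
    1, 2, le_refl _, by omega, by omega, by omega, by omega, rfl⟩
  have hbdd : BddBelow S := by
    refine ⟨0, ?_⟩
    rintro r ⟨m, n, _, _, _, _, _, rfl⟩
    exact nid_nonneg _
  constructor
  · -- lower bound
    set K := Nat.log b N + 1 with hK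
    have hNK : N < b ^ K := Nat.lt_pow_succ_log_self hb1 N
    have hbK : b ^ K ≤ b * N := by
      rw [hK, pow_succ, Nat.mul_comm]
      exact Nat.mul_le_mul_left b (Nat.pow_log_le_self b (by omega))
    apply le_csInf hne
    rintro r ⟨m, n, hm1, hmN, hn1, hnN, hmn, rfl⟩
    have hnK : n < b ^ K := lt_of_le_of_lt hnN hNK
    have hmK : m < b ^ K := lt_of_le_of_lt hmN hNK
    set j : ℤ := (Rv b K n : ℤ) - (Rv b K m : ℤ) with hj
    have hj0 : j ≠ 0 := by
      intro h
      apply hmn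
      have : Rv b K n = Rv b K m := by omega
      exact (Rv_inj b hb0 K n m hnK hmK this).symm
    have hjlt : |j| < ((b ^ K : ℕ) : ℤ) := by
      have h1 := Rv_lt b hb0 K n
      have h2 := Rv_lt b hb0 K m
      have e1 : (Rv b K n : ℤ) < ((b ^ K : ℕ) : ℤ) := by exact_mod_cast h1
      have e2 : (Rv b K m : ℤ) < ((b ^ K : ℕ) : ℤ) := by exact_mod_cast h2
      have e3 : (0:ℤ) ≤ (Rv b K n : ℤ) := Int.ofNat_nonneg _
      have e4 : (0:ℤ) ≤ (Rv b K m : ℤ) := Int.ofNat_nonneg _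
      rw [abs_lt]
      omega
    have hnd : ¬ ((b ^ K : ℕ) : ℤ) ∣ j := by
      intro hdvd
      have h2 : ((b ^ K : ℕ) : ℤ) ≤ |j| := Int.le_of_dvd (abs_pos.2 hj0) ((dvd_abs _ _).2 hdvd)
      exact absurd h2 (not_le.2 hjlt)
    have hdiff : vdc b n - vdc b m = (j : ℝ) / ((b ^ K : ℕ) : ℝ) := by
      rw [vdc_eq_Rv b K n hb2 hnK, vdc_eq_Rv b K m hb2 hmK, hj]
      push_cast
      ring
    rw [hdiff]
    have h1 := nid_ge j (b ^ K) (pow_pos hb0 K) hnd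
    refine le_trans ?_ h1
    apply one_div_le_one_div_of_le
    · positivity
    · exact_mod_cast hbK
  · -- upper bound
    set k := max (Nat.log b N) 1 with hk
    have hk1 : 1 ≤ k := le_max_right _ _
    have h2k : 2 * b ^ (k - 1) ≤ N := by
      rcases Nat.lt_or_ge N b with hNb | hbN
      · have hlog : Nat.log b N = 0 := Nat.log_eq_zero_iff.2 (Or.inl hNb)
        have : k = 1 := by rw [hk, hlog]; simp
        rw [this]
        simpa using hN
      · have hlog : 1 ≤ Nat.log b N := Nat.log_pos hb1 hbN
        have hkl : k = Nat.log b N := by rw [hk]; omega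
        have h1 : b ^ k ≤ N := by rw [hkl]; exact Nat.pow_log_le_self b (by omega)
        have h2 : 2 * b ^ (k - 1) ≤ b * b ^ (k - 1) := Nat.mul_le_mul_right _ (by omega)
        have h3 : b * b ^ (k - 1) = b ^ k := by rw [← pow_succ']; congr 1; omega
        omega
    have hNk1 : N < b ^ (k + 1) := by
      rcases Nat.lt_or_ge N b with hNb | hbN
      · have hlog : Nat.log b N = 0 := Nat.log_eq_zero_iff.2 (Or.inl hNb)
        have hk1' : k = 1 := by rw [hk, hlog]; simp
        rw [hk1']
        calc N < b := hNb
          _ ≤ b ^ 2 := by nlinarith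
      · have hlog : 1 ≤ Nat.log b N := Nat.log_pos hb1 hbN
        have hkl : k = Nat.log b N := by rw [hk]; omega
        rw [hkl]
        exact Nat.lt_pow_succ_log_self hb1 N
    have hpowpos : 0 < b ^ (k - 1) := pow_pos hb0 _
    have hmem : nid (vdc b (2 * b ^ (k - 1)) - vdc b (b ^ (k - 1))) ∈ S := by
      refine ⟨b ^ (k - 1), 2 * b ^ (k - 1), hpowpos, by omega, by omega, h2k, by omega, rfl⟩
    have hle := csInf_le hbdd hmem
    have hv1 : vdc b (b ^ (k - 1)) = (1 : ℝ) / (b : ℝ) ^ k := by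
      have := vdc_pow b 1 k hb2 hk1 (by omega)
      rw [one_mul] at this
      rw [this]
      norm_num
    have hv2 : vdc b (2 * b ^ (k - 1)) = (2 : ℝ) / (b : ℝ) ^ k := by
      have := vdc_pow b 2 k hb2 hk1 (by omega)
      rw [this]
      norm_num
    have hbkR : (3:ℝ) ≤ (b:ℝ) ^ k := by
      calc (3:ℝ) ≤ (b:ℝ) := by exact_mod_cast hb
        _ = (b:ℝ) ^ 1 := (pow_one _).symm
        _ ≤ (b:ℝ) ^ k := pow_le_pow_right₀ (by exact_mod_cast hb1.le) hk1
    have hval : nid (vdc b (2 * b ^ (k - 1)) - vdc b (b ^ (k - 1))) = 1 / (b:ℝ) ^ k := by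
      rw [hv1, hv2]
      have heq : (2 : ℝ) / (b : ℝ) ^ k - (1 : ℝ) / (b : ℝ) ^ k = 1 / (b:ℝ) ^ k := by ring
      rw [heq]
      apply nid_small
      · positivity
      · rw [div_lt_div_iff₀ (by linarith) (by norm_num)]
        linarith
    rw [hval] at hle
    refine le_trans hle ?_
    rw [div_le_div_iff₀ (by linarith) hNR]
    have : (N : ℝ) ≤ (b:ℝ) ^ (k+1) := by
      exact_mod_cast le_of_lt hNk1
    calc (1:ℝ) * N = (N:ℝ) := by ring
      _ ≤ (b:ℝ) ^ (k + 1) := this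
      _ = (b:ℝ) * (b:ℝ) ^ k := by ring
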